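/- Let 0 < μ_2 < μ_3 < μ_4 and ρ_1, ρ_2, ρ_3, ρ_4 ∈ ℝ. If ρ_1 ≥ 0, ρ_1 + ρ_2 + ρ_3 + ρ_4 ≥ 0, ρ_1 + (1 − μ_3/μ_2)ρ_3 + (1 − μ_4/μ_2)ρ_4 ≥ 0, and ρ_1 + (1 − μ_4/μ_3)(1 − μ_4/μ_2)ρ_4 ≥ 0, then ρ_1 + ρ_2 e^{−μ_2 s} + ρ_3 e^{−μ_3 s} + ρ_4 e^{−μ_4 s} ≥ 0 for every s ∈ ℝ_+ (in particular ρ_1 λ_1^t + ρ_2 λ_2^t + ρ_3 λ_3^t + ρ_4 λ_4^t ≥ 0 for all t ∈ ℕ when μ_i = −ln(λ_i/λ_1) with λ_1 > λ_2 > λ_3 > λ_4 > 0). -/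

import Mathlib

/-!
Write `f(s) = z + ∑ᵢ cᵢ e^{-μᵢ s}`. For any index `j`, `μⱼ f + f'` is `μⱼ` times the exponential
sum with coefficients `(1 - μᵢ/μⱼ) cᵢ`, in which the `j`-th term has disappeared. Since
`(e^{μⱼ s} f(s))' = e^{μⱼ s} (μⱼ f + f')`, non-negativity of `f(0)` and of the reduced sum on
`[0, ∞)` gives non-negativity of `f` there. Reducing successively by `μ₂`, `μ₃`, `μ₄` leaves the
constant `ρ₁`, and the four hypotheses are the values at `s = 0` along the way. The discrete
statement follows from `λᵢᵗ = λ₁ᵗ e^{-μᵢ t}`.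
-/

open Real Finset

theorem nonneg_of_mul_add_deriv_nonneg {f f' : ℝ → ℝ} {μ a : ℝ}
    (hf : ∀ x, a ≤ x → HasDerivAt f (f' x) x) (ha : 0 ≤ f a)
    (hd : ∀ x, a ≤ x → 0 ≤ μ * f x + f' x) {s : ℝ} (hs : a ≤ s) : 0 ≤ f s := by
  set g : ℝ → ℝ := fun x ↦ exp (μ * x) * f x
  have hg : ∀ x, a ≤ x → HasDerivAt g (exp (μ * x) * (μ * f x + f' x)) x := fun x hx ↦
    (((hasDerivAt_id' x).const_mul μ).exp.mul (hf x hx)).congr_deriv (by ring)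
  have hmono : MonotoneOn g (Set.Ici a) := by
    refine monotoneOn_of_hasDerivWithinAt_nonneg (convex_Ici a)
      (fun x hx ↦ (hg x hx).continuousAt.continuousWithinAt)
      (fun x hx ↦ (hg x (interior_subset hx)).hasDerivWithinAt) fun x hx ↦ ?_
    exact mul_nonneg (exp_pos _).le (hd x (interior_subset hx))
  have hgs : 0 ≤ exp (μ * s) * f s :=
    (mul_nonneg (exp_pos _).le ha).trans (hmono Set.self_mem_Ici hs hs)
  exact nonneg_of_mul_nonneg_right hgs (exp_pos _)

noncomputable def expSum {ι : Type*} [Fintype ι] (z : ℝ) (c μ : ι → ℝ) (s : ℝ) : ℝ :=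
  z + ∑ i, c i * exp (-μ i * s)

section expSum

variable {ι : Type*} [Fintype ι] (z : ℝ) (c μ : ι → ℝ)

theorem expSum_zero : expSum z c μ 0 = z + ∑ i, c i := by
  simp [expSum]

theorem hasDerivAt_expSum (s : ℝ) :
    HasDerivAt (expSum z c μ) (∑ i, c i * (-μ i * exp (-μ i * s))) s := by
  refine (HasDerivAt.fun_sum fun i _ ↦ ?_).const_add z
  exact (((hasDerivAt_id' s).const_mul (-μ i)).exp.const_mul (c i)).congr_deriv (by ring)

theorem mul_expSum_add_deriv {j : ι} (hj : μ j ≠ 0) (s : ℝ) :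
    μ j * expSum z c μ s + ∑ i, c i * (-μ i * exp (-μ i * s)) =
      μ j * expSum z (fun i ↦ (1 - μ i / μ j) * c i) μ s := by
  rw [expSum, expSum, mul_add, mul_add, add_assoc, mul_sum, mul_sum, ← sum_add_distrib]
  congr 1
  refine sum_congr rfl fun i _ ↦ ?_
  field_simp
  ring

end expSum

theorem expSum_nonneg_of_reduced_nonneg {ι : Type*} [Fintype ι] {z : ℝ} {c μ : ι → ℝ} {j : ι}
    (hj : 0 < μ j) (h0 : 0 ≤ z + ∑ i, c i)
    (h : ∀ s, 0 ≤ s → 0 ≤ expSum z (fun i ↦ (1 - μ i / μ j) * c i) μ s)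
    {s : ℝ} (hs : 0 ≤ s) : 0 ≤ expSum z c μ s :=
  nonneg_of_mul_add_deriv_nonneg (fun x _ ↦ hasDerivAt_expSum z c μ x)
    (by rwa [expSum_zero]) (fun x hx ↦ by
      rw [mul_expSum_add_deriv z c μ hj.ne']
      exact mul_nonneg hj.le (h x hx)) hs

theorem pow_eq_pow_mul_exp_of_eq_neg_log {a b μ : ℝ} (ha : 0 < a) (hb : 0 < b)
    (hμ : μ = -log (b / a)) (t : ℕ) : b ^ t = a ^ t * exp (-μ * t) := by
  rw [hμ, neg_neg, mul_comm (log _), exp_nat_mul, exp_log (div_pos hb ha), div_pow,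
    mul_div_cancel₀ _ (pow_ne_zero t ha.ne')]

/-- Sufficient conditions for non-negativity of a four-term exponential sum
(the n = 4 instance used for the insulin infusion example), together with the resulting
non-negativity of `ρ₁ λ₁ᵗ + ρ₂ λ₂ᵗ + ρ₃ λ₃ᵗ + ρ₄ λ₄ᵗ` for all `t ∈ ℕ` when
`μᵢ = -ln(λᵢ/λ₁)` with `λ₁ > λ₂ > λ₃ > λ₄ > 0`. -/
theorem nonneg_four_term_exp_sum
    (μ2 μ3 μ4 ρ1 ρ2 ρ3 ρ4 : ℝ)
    (hμ2 : 0 < μ2) (hμ23 : μ2 < μ3) (hμ34 : μ3 < μ4)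
    (h1 : 0 ≤ ρ1)
    (h2 : 0 ≤ ρ1 + ρ2 + ρ3 + ρ4)
    (h3 : 0 ≤ ρ1 + (1 - μ3 / μ2) * ρ3 + (1 - μ4 / μ2) * ρ4)
    (h4 : 0 ≤ ρ1 + (1 - μ4 / μ3) * (1 - μ4 / μ2) * ρ4) :
    (∀ s : ℝ, 0 ≤ s →
        0 ≤ ρ1 + ρ2 * Real.exp (-μ2 * s) + ρ3 * Real.exp (-μ3 * s)
            + ρ4 * Real.exp (-μ4 * s)) ∧
      (∀ lam1 lam2 lam3 lam4 : ℝ, 0 < lam4 → lam4 < lam3 → lam3 < lam2 → lam2 < lam1 →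
        μ2 = -Real.log (lam2 / lam1) → μ3 = -Real.log (lam3 / lam1) →
        μ4 = -Real.log (lam4 / lam1) →
        ∀ t : ℕ, 0 ≤ ρ1 * lam1 ^ t + ρ2 * lam2 ^ t + ρ3 * lam3 ^ t + ρ4 * lam4 ^ t) := by
  have hμ3 : 0 < μ3 := hμ2.trans hμ23
  have hμ4 : 0 < μ4 := hμ3.trans hμ34
  have hexp : ∀ s : ℝ, 0 ≤ s →
      0 ≤ ρ1 + ρ2 * exp (-μ2 * s) + ρ3 * exp (-μ3 * s) + ρ4 * exp (-μ4 * s) := by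
    intro s hs
    have hsum : 0 ≤ expSum ρ1 ![ρ2, ρ3, ρ4] ![μ2, μ3, μ4] s := by
      refine expSum_nonneg_of_reduced_nonneg (j := 0) hμ2 ?_ (fun s hs ↦ ?_) hs
      · simpa [Fin.sum_univ_three, add_assoc] using h2
      refine expSum_nonneg_of_reduced_nonneg (j := 1) hμ3 ?_ (fun s hs ↦ ?_) hs
      · simpa [Fin.sum_univ_three, hμ2.ne', add_assoc] using h3
      refine expSum_nonneg_of_reduced_nonneg (j := 2) hμ4 ?_ (fun s hs ↦ ?_) hs
      · simpa [Fin.sum_univ_three, hμ2.ne', hμ3.ne', mul_assoc] using h4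
      · simpa [expSum, Fin.sum_univ_three, hμ2.ne', hμ3.ne', hμ4.ne'] using h1
    simpa [expSum, Fin.sum_univ_three, add_assoc] using hsum
  refine ⟨hexp, fun lam1 lam2 lam3 lam4 hl4 hl43 hl32 hl21 hm2 hm3 hm4 t ↦ ?_⟩
  have hl3 := hl4.trans hl43
  have hl2 := hl3.trans hl32
  have hl1 := hl2.trans hl21
  rw [pow_eq_pow_mul_exp_of_eq_neg_log hl1 hl2 hm2, pow_eq_pow_mul_exp_of_eq_neg_log hl1 hl3 hm3,
    pow_eq_pow_mul_exp_of_eq_neg_log hl1 hl4 hm4]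
  exact (mul_nonneg (pow_nonneg hl1.le t) (hexp t t.cast_nonneg)).trans_eq (by ring)
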